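/- For √3/2 < r ≤ 1, let K_r ⊂ ℝ² be the pentagon K_r = conv{(0,1), (√3/2, −1/2), (−√3/2, −1/2), (√(1−r²), −r), (−√(1−r²), −r)}. Then K_r is in Löwner position, but the normalized difference body (1/D(K_r))·(K_r − K_r) is not in Löwner position. -/

import Mathlib

open MeasureTheory Metric Set Pointwise
open scoped RealInnerProductSpace

/-- A convex body: a compact convex set with nonempty interior. -/
def IsConvexBody {n : ℕ} (K : Set (EuclideanSpace ℝ (Fin n))) : Prop :=
  IsCompact K ∧ Convex ℝ K ∧ (interior K).Nonempty


/-- `K` is in Löwner position if `K ⊆ B₂ⁿ` and every ellipsoid (affine image of the unit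
ball) containing `K` has volume at least that of the unit ball. -/
def InLownerPosition {n : ℕ} (K : Set (EuclideanSpace ℝ (Fin n))) : Prop :=
  K ⊆ closedBall 0 1 ∧
  ∀ (A : EuclideanSpace ℝ (Fin n) ≃ₗ[ℝ] EuclideanSpace ℝ (Fin n)) (t : EuclideanSpace ℝ (Fin n)),
    K ⊆ (fun x => A x + t) '' closedBall 0 1 →
    volume (closedBall (0 : EuclideanSpace ℝ (Fin n)) 1) ≤
      volume ((fun x => A x + t) '' closedBall 0 1)

/-- The point `(a, b)` of the Euclidean plane. -/
noncomputable def pt (a b : ℝ) : EuclideanSpace ℝ (Fin 2) :=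
  (WithLp.equiv 2 (Fin 2 → ℝ)).symm ![a, b]

/-- The "sailing boat" pentagon `K_r`. -/
noncomputable def sailingBoat (r : ℝ) : Set (EuclideanSpace ℝ (Fin 2)) :=
  convexHull ℝ
    {pt 0 1, pt (Real.sqrt 3 / 2) (-(1/2)), pt (-(Real.sqrt 3 / 2)) (-(1/2)),
      pt (Real.sqrt (1 - r^2)) (-r), pt (-(Real.sqrt (1 - r^2))) (-r)}

/-!
The vertices `(0, 1)` and `(±√3/2, -1/2)` of `K_r` form an equilateral triangle inscribed in the
unit circle. An ellipse `{y : ‖B y - c‖ ≤ 1}` containing them satisfies `‖B‖_HS² ≤ 2`, because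
these three vectors add up to zero and form a tight frame; hence `|det B| ≤ 1` and the ellipse is
at least as large as the unit disc, which contains `K_r`.

On the other hand `D(K_r) ≥ √(2 + 2r)`, the distance from the apex to a bottom vertex, and every
difference of two vertices divided by `√(2 + 2r)` lies in the ellipse with semi-axes `19/20` and
`103/100`. That ellipse contains the normalized difference body and has area `0.9785 π < π`.
-/

local notation "ℝ²" => EuclideanSpace ℝ (Fin 2)

section Ellipsoid

variable {E : Type*} [NormedAddCommGroup E] [NormedSpace ℝ E] [MeasurableSpace E] [BorelSpace E]
  [FiniteDimensional ℝ E] (μ : Measure E) [μ.IsAddHaarMeasure]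

theorem addHaar_image_affine (A : E ≃ₗ[ℝ] E) (t : E) (s : Set E) :
    μ ((fun x => A x + t) '' s) = ENNReal.ofReal |LinearMap.det A.toLinearMap| * μ s := by
  rw [← image_image (· + t) A, image_add_right, measure_preimage_add_right]
  exact Measure.addHaar_image_linearMap μ A.toLinearMap s

end Ellipsoid

section LownerPosition

variable {n : ℕ} {K : Set (EuclideanSpace ℝ (Fin n))}

theorem inLownerPosition_of_one_le_abs_det (hK : K ⊆ closedBall 0 1)
    (hdet : ∀ (A : EuclideanSpace ℝ (Fin n) ≃ₗ[ℝ] EuclideanSpace ℝ (Fin n)) t,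
      K ⊆ (fun x => A x + t) '' closedBall 0 1 → 1 ≤ |LinearMap.det A.toLinearMap|) :
    InLownerPosition K := by
  refine ⟨hK, fun A t hA => ?_⟩
  rw [addHaar_image_affine]
  exact le_mul_of_one_le_left zero_le (ENNReal.one_le_ofReal.mpr (hdet A t hA))

theorem not_inLownerPosition_of_subset_ellipsoid
    (A : EuclideanSpace ℝ (Fin n) ≃ₗ[ℝ] EuclideanSpace ℝ (Fin n)) (t : EuclideanSpace ℝ (Fin n))
    (hK : K ⊆ (fun x => A x + t) '' closedBall 0 1) (hdet : |LinearMap.det A.toLinearMap| < 1) :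
    ¬ InLownerPosition K := by
  rintro ⟨-, hmin⟩
  refine (hmin A t hK).not_gt ?_
  rw [addHaar_image_affine]
  nth_rewrite 2 [← one_mul (volume (closedBall (0 : EuclideanSpace ℝ (Fin n)) 1))]
  exact (ENNReal.mul_lt_mul_iff_left (measure_closedBall_pos volume _ one_pos).ne'
    measure_closedBall_lt_top.ne).mpr (ENNReal.ofReal_lt_one.mpr hdet)

end LownerPosition

theorem smul_sub_convexHull_subset {𝕜 E : Type*} [Field 𝕜] [LinearOrder 𝕜] [IsStrictOrderedRing 𝕜]
    [AddCommGroup E] [Module 𝕜 E] {S C : Set E} (hC : Convex 𝕜 C) (c : 𝕜)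
    (h : ∀ p ∈ S, ∀ q ∈ S, c • (p - q) ∈ C) :
    c • (convexHull 𝕜 S - convexHull 𝕜 S) ⊆ C := by
  rw [← convexHull_sub, ← convexHull_smul]
  refine convexHull_min ?_ hC
  rintro _ ⟨_, ⟨p, hp, q, hq, rfl⟩, rfl⟩
  exact h p hp q hq

@[simp] theorem pt_apply_zero (a b : ℝ) : pt a b 0 = a := rfl

@[simp] theorem pt_apply_one (a b : ℝ) : pt a b 1 = b := rfl

theorem norm_sq_eq_fin_two (v : ℝ²) : ‖v‖ ^ 2 = v 0 ^ 2 + v 1 ^ 2 := by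
  simp [EuclideanSpace.real_norm_sq_eq, Fin.sum_univ_two]

theorem map_pt (B : ℝ² →ₗ[ℝ] ℝ²) (a b : ℝ) : B (pt a b) = a • B (pt 1 0) + b • B (pt 0 1) := by
  rw [← map_smul, ← map_smul, ← map_add]
  congr 1
  ext i
  fin_cases i <;> simp

theorem det_eq_apply_pt (B : ℝ² →ₗ[ℝ] ℝ²) :
    LinearMap.det B = B (pt 1 0) 0 * B (pt 0 1) 1 - B (pt 1 0) 1 * B (pt 0 1) 0 := by
  have hb : ∀ i, (PiLp.basisFun 2 ℝ (Fin 2)) i = ![pt 1 0, pt 0 1] i := by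
    intro i; ext j; fin_cases i <;> fin_cases j <;> simp [PiLp.basisFun_apply]
  rw [← LinearMap.det_toMatrix (PiLp.basisFun 2 ℝ (Fin 2)), Matrix.det_fin_two]
  simp [LinearMap.toMatrix_apply, hb]
  ring

theorem abs_det_le_one_of_triangle_mem_ball (B : ℝ² →ₗ[ℝ] ℝ²) (c : ℝ²)
    (h₁ : ‖B (pt 0 1) - c‖ ≤ 1) (h₂ : ‖B (pt (√3 / 2) (-(1 / 2))) - c‖ ≤ 1)
    (h₃ : ‖B (pt (-(√3 / 2)) (-(1 / 2))) - c‖ ≤ 1) :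
    |LinearMap.det B| ≤ 1 := by
  set p := B (pt 1 0)
  set q := B (pt 0 1)
  have hsq : ∀ a b, ‖B (pt a b) - c‖ ≤ 1 →
      (a * p 0 + b * q 0 - c 0) ^ 2 + (a * p 1 + b * q 1 - c 1) ^ 2 ≤ 1 := by
    intro a b h
    have := pow_le_one₀ (n := 2) (norm_nonneg _) h
    rwa [norm_sq_eq_fin_two, map_pt] at this
  have e₁ := hsq 0 1 (by simpa [q] using h₁)
  have e₂ := hsq _ _ h₂
  have e₃ := hsq _ _ h₃
  have hs : √3 ^ 2 = 3 := Real.sq_sqrt (by norm_num)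
  have frame : p 0 ^ 2 + p 1 ^ 2 + q 0 ^ 2 + q 1 ^ 2 ≤ 2 := by
    nlinarith [congrArg (· * p 0 ^ 2) hs, congrArg (· * p 1 ^ 2) hs,
      sq_nonneg (c 0), sq_nonneg (c 1)]
  rw [det_eq_apply_pt, abs_le]
  constructor
  · nlinarith [sq_nonneg (p 0 + q 1), sq_nonneg (p 1 - q 0)]
  · nlinarith [sq_nonneg (p 0 - q 1), sq_nonneg (p 1 + q 0)]

noncomputable def sailingBoatVertices (r : ℝ) : Set ℝ² :=
  {pt 0 1, pt (√3 / 2) (-(1 / 2)), pt (-(√3 / 2)) (-(1 / 2)), pt √(1 - r ^ 2) (-r),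
    pt (-√(1 - r ^ 2)) (-r)}

theorem sailingBoat_eq_convexHull (r : ℝ) : sailingBoat r = convexHull ℝ (sailingBoatVertices r) :=
  rfl

theorem one_le_abs_det_of_triangle_subset (A : ℝ² ≃ₗ[ℝ] ℝ²) (t : ℝ²)
    (h : {pt 0 1, pt (√3 / 2) (-(1 / 2)), pt (-(√3 / 2)) (-(1 / 2))} ⊆
      (fun x => A x + t) '' closedBall 0 1) :
    1 ≤ |LinearMap.det A.toLinearMap| := by
  have hball : ∀ v ∈ (fun x => A x + t) '' closedBall 0 1, ‖A.symm v - A.symm t‖ ≤ 1 := by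
    rintro _ ⟨x, hx, rfl⟩
    simpa using hx
  have hB := abs_det_le_one_of_triangle_mem_ball A.symm (A.symm t)
    (hball _ (h (by simp))) (hball _ (h (by simp))) (hball _ (h (by simp)))
  have hA : 0 < |LinearMap.det A.toLinearMap| := abs_pos.mpr A.isUnit_det'.ne_zero
  rwa [LinearEquiv.det_coe_symm, abs_inv, inv_le_one₀ hA] at hB

theorem sailingBoat_subset_closedBall {r : ℝ} (hr₀ : 0 ≤ r) (hr₁ : r ≤ 1) :
    sailingBoat r ⊆ closedBall 0 1 := by
  have hs : √3 ^ 2 = 3 := Real.sq_sqrt (by norm_num)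
  have hq : √(1 - r ^ 2) ^ 2 = 1 - r ^ 2 := Real.sq_sqrt (by nlinarith)
  have hmem : ∀ a b : ℝ, a ^ 2 + b ^ 2 ≤ 1 → pt a b ∈ closedBall (0 : ℝ²) 1 := by
    intro a b hab
    rw [mem_closedBall_zero_iff, ← sq_le_one_iff₀ (norm_nonneg _), norm_sq_eq_fin_two]
    simpa using hab
  refine convexHull_min ?_ (convex_closedBall 0 1)
  simp only [insert_subset_iff, singleton_subset_iff]
  refine ⟨hmem _ _ ?_, hmem _ _ ?_, hmem _ _ ?_, hmem _ _ ?_, hmem _ _ ?_⟩ <;> nlinarith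

theorem sailingBoat_inLownerPosition {r : ℝ} (hr₀ : 0 ≤ r) (hr₁ : r ≤ 1) :
    InLownerPosition (sailingBoat r) := by
  refine inLownerPosition_of_one_le_abs_det (sailingBoat_subset_closedBall hr₀ hr₁)
    fun A t hK => one_le_abs_det_of_triangle_subset A t (Subset.trans ?_ hK)
  refine Subset.trans ?_ (subset_convexHull ℝ _)
  intro v hv
  simp only [mem_insert_iff, mem_singleton_iff] at hv ⊢
  tauto

noncomputable def diagEquiv (a b : ℝ) (ha : a ≠ 0) (hb : b ≠ 0) : ℝ² ≃ₗ[ℝ] ℝ² where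
  toFun v := pt (a * v 0) (b * v 1)
  invFun v := pt (a⁻¹ * v 0) (b⁻¹ * v 1)
  map_add' v w := by ext i; fin_cases i <;> simp <;> ring
  map_smul' k v := by ext i; fin_cases i <;> simp <;> ring
  left_inv v := by ext i; fin_cases i <;> simp [ha, hb]
  right_inv v := by ext i; fin_cases i <;> simp [ha, hb]

section diagEquiv

variable {a b : ℝ} (ha : a ≠ 0) (hb : b ≠ 0)

theorem diagEquiv_apply (v : ℝ²) : diagEquiv a b ha hb v = pt (a * v 0) (b * v 1) := rfl

theorem det_diagEquiv : LinearMap.det (diagEquiv a b ha hb).toLinearMap = a * b := by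
  rw [det_eq_apply_pt]
  simp [diagEquiv_apply]

theorem mem_diagEquiv_image_closedBall {v : ℝ²} (hv : (v 0 / a) ^ 2 + (v 1 / b) ^ 2 ≤ 1) :
    v ∈ diagEquiv a b ha hb '' closedBall 0 1 := by
  refine ⟨pt (v 0 / a) (v 1 / b), ?_, ?_⟩
  · rw [mem_closedBall_zero_iff, ← sq_le_one_iff₀ (norm_nonneg _), norm_sq_eq_fin_two]
    simpa using hv
  · ext i; fin_cases i <;> simp [diagEquiv_apply, mul_div_cancel₀, ha, hb]

end diagEquiv

theorem two_add_two_mul_le_diam_sq {r : ℝ} (hr : r ^ 2 ≤ 1) :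
    2 + 2 * r ≤ diam (sailingBoat r) ^ 2 := by
  have hbdd : Bornology.IsBounded (sailingBoat r) :=
    ((toFinite _).isCompact_convexHull ℝ).isBounded
  have hdist := dist_le_diam_of_mem hbdd (subset_convexHull ℝ _ (by simp : pt 0 1 ∈ _))
    (subset_convexHull ℝ _ (by simp : pt √(1 - r ^ 2) (-r) ∈ _))
  have hq : √(1 - r ^ 2) ^ 2 = 1 - r ^ 2 := Real.sq_sqrt (by linarith)
  calc 2 + 2 * r = dist (pt 0 1) (pt √(1 - r ^ 2) (-r)) ^ 2 := by
        rw [dist_eq_norm, norm_sq_eq_fin_two]; simp; linarith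
    _ ≤ diam (sailingBoat r) ^ 2 := pow_le_pow_left₀ dist_nonneg hdist 2

theorem sailingBoatVertices_sub_sq_le {r : ℝ} (h1 : √3 / 2 < r) (h2 : r ≤ 1) {p q : ℝ²}
    (hp : p ∈ sailingBoatVertices r) (hq : q ∈ sailingBoatVertices r) :
    ((p - q) 0 / (19 / 20)) ^ 2 + ((p - q) 1 / (103 / 100)) ^ 2 ≤ 2 + 2 * r := by
  have h3 : √3 ^ 2 = 3 := Real.sq_sqrt (by norm_num)
  have h3₀ : 0 ≤ √3 := Real.sqrt_nonneg 3
  have hr : 4 / 5 ≤ r := by nlinarith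
  set s := √(1 - r ^ 2)
  have hs₀ : 0 ≤ s := Real.sqrt_nonneg _
  have hs_sq : s ^ 2 = 1 - r ^ 2 := Real.sq_sqrt (by nlinarith)
  have apex_side : (√3 / 2 / (19 / 20)) ^ 2 + (3 / 2 / (103 / 100)) ^ 2 ≤ 2 + 2 * r := by
    nlinarith
  have side_side : (√3 / (19 / 20)) ^ 2 ≤ 2 + 2 * r := by nlinarith
  have apex_bottom : (s / (19 / 20)) ^ 2 + ((1 + r) / (103 / 100)) ^ 2 ≤ 2 + 2 * r := by
    nlinarith [sq_nonneg (r - 4 / 5)]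
  have side_bottom :
      ((√3 / 2 + s) / (19 / 20)) ^ 2 + ((r - 1 / 2) / (103 / 100)) ^ 2 ≤ 2 + 2 * r := by
    nlinarith [sq_nonneg (√3 * s - 11 / 10), mul_nonneg h3₀ hs₀, sq_nonneg (r - 4 / 5)]
  have bottom_bottom : (2 * s / (19 / 20)) ^ 2 ≤ 2 + 2 * r := by nlinarith
  simp only [sailingBoatVertices, mem_insert_iff, mem_singleton_iff] at hp hq
  -- `√3 * s ≥ 0` lets `side_bottom` also bound the differences of a side and a bottom vertex
  -- on the same side, `(±(√3/2 - s), r - 1/2)`.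
  rcases hp with rfl | rfl | rfl | rfl | rfl <;> rcases hq with rfl | rfl | rfl | rfl | rfl <;>
    · simp only [PiLp.sub_apply, pt_apply_zero, pt_apply_one]
      linarith [mul_nonneg h3₀ hs₀]

theorem sailingBoat_differenceBody_not_inLownerPosition {r : ℝ} (h1 : √3 / 2 < r) (h2 : r ≤ 1) :
    ¬ InLownerPosition ((diam (sailingBoat r))⁻¹ • (sailingBoat r - sailingBoat r)) := by
  have hr : 0 < r := lt_of_le_of_lt (by positivity) h1
  have hD := two_add_two_mul_le_diam_sq (r := r) (by nlinarith)
  set D := diam (sailingBoat r)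
  have hD₀ : 0 < D ^ 2 := by linarith
  let A := diagEquiv (19 / 20) (103 / 100) (by norm_num) (by norm_num)
  have hconvex : Convex ℝ (A '' closedBall 0 1) :=
    (convex_closedBall 0 1).linear_image A.toLinearMap
  refine not_inLownerPosition_of_subset_ellipsoid A 0 ?_ (by rw [det_diagEquiv]; norm_num)
  simp only [add_zero, sailingBoat_eq_convexHull]
  refine smul_sub_convexHull_subset hconvex _
    fun p hp q hq => mem_diagEquiv_image_closedBall _ _ ?_
  have hpq := sailingBoatVertices_sub_sq_le h1 h2 hp hq
  calc (D⁻¹ * (p - q) 0 / (19 / 20)) ^ 2 + (D⁻¹ * (p - q) 1 / (103 / 100)) ^ 2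
      = (((p - q) 0 / (19 / 20)) ^ 2 + ((p - q) 1 / (103 / 100)) ^ 2) / D ^ 2 := by ring
    _ ≤ 1 := (div_le_one hD₀).mpr (hpq.trans hD)

/-- For `√3/2 < r ≤ 1`, the sailing boat `K_r` is in Löwner position, but its normalized
difference body is not. -/
theorem sailingBoat_lowner_but_difference_not (r : ℝ)
    (h1 : Real.sqrt 3 / 2 < r) (h2 : r ≤ 1) :
    InLownerPosition (sailingBoat r) ∧
    ¬ InLownerPosition
        ((Metric.diam (sailingBoat r))⁻¹ • (sailingBoat r - sailingBoat r)) :=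
  ⟨sailingBoat_inLownerPosition (lt_of_le_of_lt (by positivity) h1).le h2,
    sailingBoat_differenceBody_not_inLownerPosition h1 h2⟩
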